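/- arXiv:1702.02445 — 3 statements merged into one kernel-verified Lean document; each statement's English description precedes it below -/
import Mathlib

section
/- Let W be a real symmetric positive definite n×n matrix such that I − W is positive definite (equivalently, the spectral norm of W is strictly less than 1). Then for every y ∈ ℝⁿ, the vector Wy is the unique minimizer over x ∈ ℝⁿ of the function x ↦ (1/2)‖x − y‖₂² + (1/2) xᵀ(W⁻¹ − I)x. In other words, the linear map y ↦ Wy is the proximity operator of the quadratic function g(x) = (1/2) xᵀ(W⁻¹ − I)x. -/
open Matrix

variable {ι R : Type*} [Fintype ι]

theorem sum_sub_sq_eq_dotProduct [CommRing R] (x y : ι → R) :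
    ∑ i, (x i - y i) ^ 2 = (x - y) ⬝ᵥ (x - y) := by
  simp [dotProduct, sq]

/-- Completing the square: `‖x - y‖² + xᵀ(A - 1)x = xᵀAx - 2yᵀx + ‖y‖²` is centred at `u`. -/
theorem dotProduct_sub_add_sub_eq_of_mulVec_eq [DecidableEq ι] [CommRing R] {A : Matrix ι ι R}
    (hA : Aᵀ = A) {u y : ι → R} (hu : A *ᵥ u = y) (x : ι → R) :
    (x - y) ⬝ᵥ (x - y) + x ⬝ᵥ (A - 1) *ᵥ x - ((u - y) ⬝ᵥ (u - y) + u ⬝ᵥ (A - 1) *ᵥ u) =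
      (x - u) ⬝ᵥ A *ᵥ (x - u) := by
  have hux : u ⬝ᵥ A *ᵥ x = y ⬝ᵥ x := by
    rw [dotProduct_mulVec, ← hA, vecMul_transpose, hu]
  simp only [sub_mulVec, one_mulVec, mulVec_sub, dotProduct_sub, sub_dotProduct, hu, hux]
  rw [dotProduct_comm u y]
  ring

theorem Matrix.PosDef.dotProduct_sub_add_lt_of_mulVec_eq [DecidableEq ι] {A : Matrix ι ι ℝ}
    (hA : A.PosDef) {u y x : ι → ℝ} (hu : A *ᵥ u = y) (hx : x ≠ u) :
    (u - y) ⬝ᵥ (u - y) + u ⬝ᵥ (A - 1) *ᵥ u < (x - y) ⬝ᵥ (x - y) + x ⬝ᵥ (A - 1) *ᵥ x := by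
  have hsymm : Aᵀ = A := by simpa using hA.1.eq
  have hpos : 0 < (x - u) ⬝ᵥ A *ᵥ (x - u) := by
    simpa using hA.dotProduct_mulVec_pos (sub_ne_zero.mpr hx)
  linarith [dotProduct_sub_add_sub_eq_of_mulVec_eq hsymm hu x]

theorem stmt_4_general (n : ℕ) (W : Matrix (Fin n) (Fin n) ℝ)
    (hW : W.PosDef)
    (y : Fin n → ℝ) :
    ∀ x : Fin n → ℝ, x ≠ W.mulVec y →
      (1 / 2) * (∑ i, (W.mulVec y i - y i) ^ 2) +
        (1 / 2) * ((W.mulVec y) ⬝ᵥ (W⁻¹ - 1).mulVec (W.mulVec y)) <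
      (1 / 2) * (∑ i, (x i - y i) ^ 2) +
        (1 / 2) * (x ⬝ᵥ (W⁻¹ - 1).mulVec x) := by
  intro x hx
  have hWy : W⁻¹ *ᵥ (W *ᵥ y) = y := by
    rw [mulVec_mulVec, nonsing_inv_mul W (isUnit_iff_ne_zero.mpr hW.det_pos.ne'), one_mulVec]
  have key := PosDef.dotProduct_sub_add_lt_of_mulVec_eq hW.inv hWy hx
  rw [sum_sub_sq_eq_dotProduct, sum_sub_sq_eq_dotProduct]
  linarith

/-- If `W` is real symmetric positive definite with `I - W` positive definite, then for
every `y`, `W y` is the unique minimizer of `x ↦ (1/2)‖x - y‖₂² + (1/2) xᵀ(W⁻¹ - I)x`,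
i.e. `y ↦ W y` is the proximity operator of `g(x) = (1/2) xᵀ(W⁻¹ - I)x`. -/
theorem stmt_4 (n : ℕ) (W : Matrix (Fin n) (Fin n) ℝ)
    (hW : W.PosDef)
    (hW' : ((1 : Matrix (Fin n) (Fin n) ℝ) - W).PosDef)
    (y : Fin n → ℝ) :
    ∀ x : Fin n → ℝ, x ≠ W.mulVec y →
      (1 / 2) * (∑ i, (W.mulVec y i - y i) ^ 2) +
        (1 / 2) * ((W.mulVec y) ⬝ᵥ (W⁻¹ - 1).mulVec (W.mulVec y)) <
      (1 / 2) * (∑ i, (x i - y i) ^ 2) +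
        (1 / 2) * (x ⬝ᵥ (W⁻¹ - 1).mulVec x) :=
  stmt_4_general n W hW y
end

section
/- There exist a scalar two-component zero-mean Gaussian mixture prior and a noise level for which the MMSE denoiser is expansive. Precisely: define for v > 0 the Gaussian density φ(y; v) = exp(−y²/(2v))/√(2πv), and for parameters α₁, α₂ ≥ 0 with α₁ + α₂ = 1, variances c₁, c₂ > 0, and σ > 0, define the scalar MMSE estimator f(y) = [α₁ φ(y; c₁+σ²)·(c₁/(c₁+σ²)) + α₂ φ(y; c₂+σ²)·(c₂/(c₂+σ²))] · y / [α₁ φ(y; c₁+σ²) + α₂ φ(y; c₂+σ²)]. Then there exist such α₁, α₂, c₁, c₂, σ and points y₁ ≠ y₂ ∈ ℝ with |f(y₁) − f(y₂)| > |y₁ − y₂|; in particular f is not nonexpansive. -/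
/-!
The posterior odds of the narrow mixture component against the wide one are `exp (a - b y²)`,
so they fall steeply in `|y|`. With `c₁ = σ = 1`, `c₂ = 7` and weights chosen so that the odds
are `1` at `y = 4` and below `1/2` at `y = 5`, the shrinkage factor `f y / y` rises from
`(k₁ + k₂)/2 = 11/16` towards `k₂ = 7/8` (`kⱼ = cⱼ/(cⱼ+σ²)`) across that unit step, and this gain,
multiplied by `y ≈ 5`, makes `f 5 - f 4 > 1`.
-/

open Real

/-- The zero-mean Gaussian density with variance `v`, evaluated at `y`. -/
noncomputable def gaussPdf (v y : ℝ) : ℝ :=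
  Real.exp (-(y ^ 2) / (2 * v)) / Real.sqrt (2 * Real.pi * v)

/-- The scalar MMSE denoiser for a two-component zero-mean Gaussian mixture prior with
weights `α₁, α₂`, variances `c₁, c₂`, and noise standard deviation `σ`. -/
noncomputable def mmseEstimator (α₁ α₂ c₁ c₂ σ y : ℝ) : ℝ :=
  (α₁ * gaussPdf (c₁ + σ ^ 2) y * (c₁ / (c₁ + σ ^ 2)) +
      α₂ * gaussPdf (c₂ + σ ^ 2) y * (c₂ / (c₂ + σ ^ 2))) * y /
    (α₁ * gaussPdf (c₁ + σ ^ 2) y + α₂ * gaussPdf (c₂ + σ ^ 2) y)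

noncomputable def posteriorOdds (α₁ α₂ c₁ c₂ σ y : ℝ) : ℝ :=
  α₁ * gaussPdf (c₁ + σ ^ 2) y / (α₂ * gaussPdf (c₂ + σ ^ 2) y)

lemma gaussPdf_pos {v : ℝ} (hv : 0 < v) (y : ℝ) : 0 < gaussPdf v y := by
  unfold gaussPdf
  positivity

lemma gaussPdf_div_gaussPdf {v w : ℝ} (hv : 0 < v) (hw : 0 < w) (y : ℝ) :
    gaussPdf v y / gaussPdf w y = √(w / v) * exp (y ^ 2 / (2 * w) - y ^ 2 / (2 * v)) := by
  have hsqrt : √(2 * π * w) / √(2 * π * v) = √(w / v) := by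
    rw [← sqrt_div' _ (by positivity), mul_div_mul_left _ _ (by positivity)]
  unfold gaussPdf
  rw [← hsqrt, exp_sub]
  simp only [neg_div, exp_neg]
  field_simp

lemma posteriorOdds_eq (α₁ α₂ y : ℝ) {c₁ c₂ σ : ℝ} (hv₁ : 0 < c₁ + σ ^ 2)
    (hv₂ : 0 < c₂ + σ ^ 2) :
    posteriorOdds α₁ α₂ c₁ c₂ σ y = α₁ / α₂ * √((c₂ + σ ^ 2) / (c₁ + σ ^ 2)) *
      exp (y ^ 2 / (2 * (c₂ + σ ^ 2)) - y ^ 2 / (2 * (c₁ + σ ^ 2))) := by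
  rw [posteriorOdds, mul_div_mul_comm, gaussPdf_div_gaussPdf hv₁ hv₂, mul_assoc]

lemma mmseEstimator_eq_posteriorOdds (α₁ c₁ c₂ σ y : ℝ) {α₂ : ℝ} (hα₂ : 0 < α₂)
    (hv₂ : 0 < c₂ + σ ^ 2) :
    mmseEstimator α₁ α₂ c₁ c₂ σ y =
      y * (c₁ / (c₁ + σ ^ 2) * posteriorOdds α₁ α₂ c₁ c₂ σ y + c₂ / (c₂ + σ ^ 2)) /
        (posteriorOdds α₁ α₂ c₁ c₂ σ y + 1) := by
  have hφ₂ := (gaussPdf_pos hv₂ y).ne'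
  have hφ := mul_ne_zero hα₂.ne' hφ₂
  unfold mmseEstimator posteriorOdds
  rw [← mul_div_mul_left _ (_ + 1) hφ]
  congr 1 <;> field_simp

/-- There exist a two-component zero-mean scalar Gaussian mixture prior and a noise level
for which the MMSE denoiser is expansive: some points `y₁ ≠ y₂` satisfy
`|f(y₁) − f(y₂)| > |y₁ − y₂|`, so `f` is not nonexpansive. -/
theorem stmt_7 :
    ∃ α₁ α₂ c₁ c₂ σ y₁ y₂ : ℝ,
      0 ≤ α₁ ∧ 0 ≤ α₂ ∧ α₁ + α₂ = 1 ∧ 0 < c₁ ∧ 0 < c₂ ∧ 0 < σ ∧ y₁ ≠ y₂ ∧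
      |y₁ - y₂| < |mmseEstimator α₁ α₂ c₁ c₂ σ y₁ - mmseEstimator α₁ α₂ c₁ c₂ σ y₂| := by
  refine ⟨exp 3 / (exp 3 + 2), 2 / (exp 3 + 2), 1, 7, 1, 4, 5, by positivity, by positivity,
    by field_simp, one_pos, by norm_num, one_pos, by norm_num, ?_⟩
  have hodds (y : ℝ) : posteriorOdds (exp 3 / (exp 3 + 2)) (2 / (exp 3 + 2)) 1 7 1 y =
      exp (3 - 3 * y ^ 2 / 16) := by
    have hsqrt : √(8 / 2 : ℝ) = 2 := by
      rw [show (8 / 2 : ℝ) = 2 ^ 2 by norm_num, sqrt_sq zero_le_two]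
    rw [posteriorOdds_eq _ _ _ (by norm_num) (by norm_num)]
    norm_num [hsqrt]
    rw [div_div_div_cancel_right₀ (by positivity), div_mul_cancel₀ _ two_ne_zero, ← exp_add]
    ring_nf
  have hsmall : exp (-(27 / 16) : ℝ) < 1 / 2 := by
    rw [exp_neg, inv_lt_comm₀ (exp_pos _) (by norm_num)]
    linarith [add_one_le_exp (27 / 16)]
  rw [mmseEstimator_eq_posteriorOdds _ _ _ _ _ (by positivity) (by norm_num),
    mmseEstimator_eq_posteriorOdds _ _ _ _ _ (by positivity) (by norm_num), hodds, hodds]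
  norm_num
  have hf₅ : 15 / 4 < 5 * (1 / 2 * exp (-(27 / 16)) + 7 / 8) / (exp (-(27 / 16)) + 1) := by
    rw [lt_div_iff₀ (by positivity)]
    linarith
  rw [abs_sub_comm, abs_of_pos (by linarith)]
  linarith
end

section
/- (Eckstein–Bertsekas ADMM convergence, exact-minimization finite-dimensional version.) Let f : ℝⁿ → ℝ and g : ℝᵐ → ℝ be convex continuous functions, let H : ℝⁿ → ℝᵐ be an injective linear map, and let ρ > 0. Suppose sequences (x^k) in ℝⁿ and (v^k), (u^k) in ℝᵐ satisfy, for every k: x^{k+1} minimizes x ↦ f(x) + (ρ/2)‖Hx − v^k − u^k‖₂² over ℝⁿ; v^{k+1} minimizes v ↦ g(v) + (ρ/2)‖Hx^{k+1} − v − u^k‖₂² over ℝᵐ; and u^{k+1} = u^k − Hx^{k+1} + v^{k+1}. If the function x ↦ f(x) + g(Hx) attains its minimum on ℝⁿ, then the sequence (x^k) converges to a minimizer of x ↦ f(x) + g(Hx). -/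
/-!
For a minimizer `xs`, the Lagrangian `f z + g w + ⟪λ, w - H z⟫` has a saddle point `(xs, λ)`:
separate `(0, f xs + g (H xs))` from the open convex strict epigraph of the value function of the
perturbed problem. For every saddle point `(xb, ρ • ub)`, the optimality conditions of the two
minimization steps, the saddle inequality and the monotonicity of `∂g` give the Fejér inequality
`‖s (k+1) - s̄‖² + ‖s (k+1) - s k‖² ≤ ‖s k - s̄‖²` for the states `s k = (v^{k+1}, u^{k+1})` and
`s̄ = (H xb, ub)` in the `ℓ²` product. So the states are bounded and successive states get close;
along a convergent subsequence the optimality conditions pass to the limit and become the saddle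
inequalities for the limit point, and Fejér monotonicity with respect to that point makes the whole
sequence converge. Injectivity of `H` transfers the convergence from
`H x^{k+1} = v^{k+1} - (u^{k+1} - u^k)` to `x^k`.
-/

open Filter Topology Set
open scoped RealInnerProductSpace

theorem nonneg_of_forall_nonneg_add_mul {a c : ℝ} (h : ∀ t, 0 < t → t ≤ 1 → 0 ≤ a + t * c) :
    0 ≤ a := by
  have hlim : Tendsto (fun t => a + t * c) (𝓝[>] 0) (𝓝 a) := by
    have : Continuous fun t : ℝ => a + t * c := by fun_prop
    simpa using (this.tendsto 0).mono_left nhdsWithin_le_nhds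
  exact ge_of_tendsto hlim (eventually_of_mem (Ioc_mem_nhdsGT one_pos) fun t ht => h t ht.1 ht.2)

theorem ConvexOn.sub_inner_le_of_forall_le_add_norm_sq {E F : Type*} [AddCommGroup E] [Module ℝ E]
    [NormedAddCommGroup F] [InnerProductSpace ℝ F] {φ : E → ℝ} (hφ : ConvexOn ℝ univ φ)
    (A : E →ₗ[ℝ] F) (b : F) {ρ : ℝ} {y : E}
    (hy : ∀ z, φ y + ρ / 2 * ‖A y - b‖ ^ 2 ≤ φ z + ρ / 2 * ‖A z - b‖ ^ 2) (z : E) :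
    φ y - ρ * ⟪A y - b, A z - A y⟫ ≤ φ z := by
  refine sub_nonneg.1 <| nonneg_of_forall_nonneg_add_mul
    (c := ρ / 2 * ‖A z - A y‖ ^ 2) fun t ht ht1 => ?_
  have hconv : φ (y + t • (z - y)) ≤ φ y + t * (φ z - φ y) := by
    have := hφ.2 (mem_univ y) (mem_univ z) (sub_nonneg.2 ht1) ht.le (sub_add_cancel 1 t)
    rw [smul_eq_mul, smul_eq_mul] at this
    calc φ (y + t • (z - y)) = φ ((1 - t) • y + t • z) := by congr 1; module
      _ ≤ (1 - t) * φ y + t * φ z := this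
      _ = φ y + t * (φ z - φ y) := by ring
  have hexp : ‖A (y + t • (z - y)) - b‖ ^ 2
      = ‖A y - b‖ ^ 2 + t * (2 * ⟪A y - b, A z - A y⟫) + t ^ 2 * ‖A z - A y‖ ^ 2 := by
    rw [show A (y + t • (z - y)) - b = (A y - b) + t • (A z - A y) by
      rw [map_add, map_smul, map_sub]; abel, norm_add_sq_real, real_inner_smul_right, norm_smul,
      Real.norm_eq_abs, mul_pow, sq_abs]
    ring
  have hmin := hy (y + t • (z - y))
  rw [hexp] at hmin
  have : 0 ≤ t * (φ z - (φ y - ρ * ⟪A y - b, A z - A y⟫) + t * (ρ / 2 * ‖A z - A y‖ ^ 2)) := by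
    nlinarith
  exact nonneg_of_mul_nonneg_right (by linarith) ht

theorem dist_sq_add_dist_sq_le_of_inner_nonpos {X : Type*} [NormedAddCommGroup X]
    [InnerProductSpace ℝ X] {p q a : X} (h : ⟪q - a, q - p⟫ ≤ 0) :
    dist q a ^ 2 + dist q p ^ 2 ≤ dist p a ^ 2 := by
  have := norm_sub_sq_real (q - a) (q - p)
  rw [sub_sub_sub_cancel_left] at this
  simp only [dist_eq_norm]
  linarith

section Fejer

variable {X : Type*} [PseudoMetricSpace X] {p : ℕ → X} {a : X}

theorem antitone_dist_of_dist_sq_add_dist_sq_le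
    (h : ∀ k, dist (p (k + 1)) a ^ 2 + dist (p (k + 1)) (p k) ^ 2 ≤ dist (p k) a ^ 2) :
    Antitone fun k => dist (p k) a :=
  antitone_nat_of_succ_le fun k => (pow_le_pow_iff_left₀ dist_nonneg dist_nonneg two_ne_zero).1
    (by nlinarith [h k])

theorem tendsto_dist_succ_of_dist_sq_add_dist_sq_le
    (h : ∀ k, dist (p (k + 1)) a ^ 2 + dist (p (k + 1)) (p k) ^ 2 ≤ dist (p k) a ^ 2) :
    Tendsto (fun k => dist (p (k + 1)) (p k)) atTop (𝓝 0) := by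
  set D := fun k => dist (p k) a ^ 2
  have hanti : Antitone D := antitone_nat_of_succ_le fun k => by nlinarith [h k]
  have hD := tendsto_atTop_ciInf hanti ⟨0, by rintro _ ⟨k, rfl⟩; positivity⟩
  have hsq : Tendsto (fun k => dist (p (k + 1)) (p k) ^ 2) atTop (𝓝 0) := by
    refine squeeze_zero (fun k => by positivity) (g := fun k => D k - D (k + 1))
      (fun k => by linarith [h k]) ?_
    simpa using hD.sub (hD.comp (tendsto_add_atTop_nat 1))
  simpa [Real.sqrt_sq dist_nonneg] using hsq.sqrt

theorem tendsto_of_antitone_dist_of_tendsto_subseq (hanti : Antitone fun k => dist (p k) a)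
    {φ : ℕ → ℕ} (hφ : Tendsto φ atTop atTop) (hsub : Tendsto (p ∘ φ) atTop (𝓝 a)) :
    Tendsto p atTop (𝓝 a) := by
  rw [tendsto_iff_dist_tendsto_zero] at hsub ⊢
  have hD := tendsto_atTop_ciInf hanti ⟨0, by rintro _ ⟨k, rfl⟩; exact dist_nonneg⟩
  rwa [tendsto_nhds_unique (hD.comp hφ) hsub] at hD

end Fejer

section ADMM

variable {E F : Type*} [AddCommGroup E] [Module ℝ E] [NormedAddCommGroup F] [InnerProductSpace ℝ F]

def IsLagrangeMultiplier (f : E → ℝ) (g : F → ℝ) (H : E →ₗ[ℝ] F) (xb : E) (lam : F) : Prop :=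
  ∀ z w, f xb + g (H xb) ≤ f z + g w + ⟪lam, w - H z⟫

/-- The strict epigraph of the value function `p ↦ ⨅ z, f z + g (H z + p)`. -/
def valueStrictEpigraph (f : E → ℝ) (g : F → ℝ) (H : E →ₗ[ℝ] F) : Set (F × ℝ) :=
  {q | ∃ z, f z + g (H z + q.1) < q.2}

theorem convex_valueStrictEpigraph {f : E → ℝ} {g : F → ℝ} (hf : ConvexOn ℝ univ f)
    (hg : ConvexOn ℝ univ g) (H : E →ₗ[ℝ] F) : Convex ℝ (valueStrictEpigraph f g H) := by
  have hφ : ConvexOn ℝ univ fun zp : E × F => f zp.1 + g (H zp.1 + zp.2) :=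
    (hf.comp_linearMap (LinearMap.fst ℝ E F)).add
      (hg.comp_linearMap (H.comp (LinearMap.fst ℝ E F) + LinearMap.snd ℝ E F))
  have hS : valueStrictEpigraph f g H = (LinearMap.snd ℝ E F).prodMap LinearMap.id ''
      {q : (E × F) × ℝ | q.1 ∈ univ ∧ f q.1.1 + g (H q.1.1 + q.1.2) < q.2} := by
    ext ⟨p, t⟩
    simp [valueStrictEpigraph]
  rw [hS]
  exact hφ.convex_strict_epigraph.linear_image _

theorem isOpen_valueStrictEpigraph (f : E → ℝ) {g : F → ℝ} (hg : Continuous g)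
    (H : E →ₗ[ℝ] F) : IsOpen (valueStrictEpigraph f g H) := by
  have : valueStrictEpigraph f g H = ⋃ z, {q : F × ℝ | f z + g (H z + q.1) < q.2} := by
    ext
    simp [valueStrictEpigraph]
  rw [this]
  exact isOpen_iUnion fun z => isOpen_lt (by fun_prop) continuous_snd

theorem exists_isLagrangeMultiplier [CompleteSpace F] {f : E → ℝ} {g : F → ℝ} {H : E →ₗ[ℝ] F}
    {xs : E} (hf : ConvexOn ℝ univ f) (hg : ConvexOn ℝ univ g) (hgc : Continuous g)
    (hxs : ∀ z, f xs + g (H xs) ≤ f z + g (H z)) : ∃ lam, IsLagrangeMultiplier f g H xs lam := by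
  set M := f xs + g (H xs)
  have hM : ((0 : F), M) ∉ valueStrictEpigraph f g H := fun ⟨z, hz⟩ =>
    (hxs z).not_gt (by simpa using hz)
  obtain ⟨L, hL⟩ := geometric_hahn_banach_open_point (convex_valueStrictEpigraph hf hg H)
    (isOpen_valueStrictEpigraph f hgc H) hM
  set β := L (0, 1)
  have hL_apply : ∀ p t, L (p, t) = L (p, 0) + t * β := fun p t => by
    rw [← smul_eq_mul, ← L.map_smul, ← L.map_add]; simp
  have hsep : ∀ z w ε, 0 < ε → L (w - H z, 0) + (f z + g w + ε) * β < M * β := by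
    intro z w ε hε
    have := hL (w - H z, f z + g w + ε) ⟨z, by simpa using hε⟩
    rwa [hL_apply, hL_apply 0, Prod.mk_zero_zero, map_zero, zero_add] at this
  have hβ : β < 0 := by
    have := hsep xs (H xs) 1 one_pos
    rw [sub_self, Prod.mk_zero_zero, map_zero, zero_add] at this
    linarith
  refine ⟨(InnerProductSpace.toDual ℝ F).symm (β⁻¹ • L.comp (ContinuousLinearMap.inl ℝ F ℝ)),
    fun z w => le_of_forall_pos_lt_add fun ε hε => ?_⟩
  rw [InnerProductSpace.toDual_symm_apply]
  have hβ0 : β ≠ 0 := hβ.ne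
  have key : (f z + g w + β⁻¹ * L (w - H z, 0) + ε) * β < M * β := by
    convert hsep z w ε hε using 1
    field_simp
    ring
  simpa using (mul_lt_mul_right_of_neg hβ).1 key

theorem isLagrangeMultiplier_of_forall_le {f : E → ℝ} {g : F → ℝ} {H : E →ₗ[ℝ] F} {xb : E}
    {lam : F} (hf : ∀ z, f xb + ⟪lam, H z - H xb⟫ ≤ f z)
    (hg : ∀ w, g (H xb) - ⟪lam, w - H xb⟫ ≤ g w) : IsLagrangeMultiplier f g H xb lam := by
  intro z w
  have := hf z
  have := hg w
  rw [show w - H z = (w - H xb) - (H z - H xb) by abel, inner_sub_right]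
  linarith

structure IsADMMSeq (f : E → ℝ) (g : F → ℝ) (H : E →ₗ[ℝ] F) (ρ : ℝ) (x : ℕ → E) (v u : ℕ → F) :
    Prop where
  x_min : ∀ k z, f (x (k + 1)) + ρ / 2 * ‖H (x (k + 1)) - v k - u k‖ ^ 2 ≤
    f z + ρ / 2 * ‖H z - v k - u k‖ ^ 2
  v_min : ∀ k w, g (v (k + 1)) + ρ / 2 * ‖H (x (k + 1)) - v (k + 1) - u k‖ ^ 2 ≤
    g w + ρ / 2 * ‖H (x (k + 1)) - w - u k‖ ^ 2
  u_succ : ∀ k, u (k + 1) = u k - H (x (k + 1)) + v (k + 1)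

-- `(v 0, u 0)` is arbitrary initial data; the state produced by iteration `k + 1` has index `k`.
def admmState (v u : ℕ → F) (k : ℕ) : WithLp 2 (F × F) := WithLp.toLp 2 (v (k + 1), u (k + 1))

namespace IsADMMSeq

variable {f : E → ℝ} {g : F → ℝ} {H : E →ₗ[ℝ] F} {ρ : ℝ} {x : ℕ → E} {v u : ℕ → F}

theorem f_add_inner_le (h : IsADMMSeq f g H ρ x v u) (hf : ConvexOn ℝ univ f) (k : ℕ) (z : E) :
    f (x (k + 1)) + ρ * ⟪u (k + 1) - (v (k + 1) - v k), H z - H (x (k + 1))⟫ ≤ f z := by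
  have := hf.sub_inner_le_of_forall_le_add_norm_sq H (v k + u k)
    (fun z => by simpa only [sub_sub] using h.x_min k z) z
  have hr : H (x (k + 1)) - (v k + u k) = -(u (k + 1) - (v (k + 1) - v k)) := by
    rw [h.u_succ]; abel
  rwa [hr, inner_neg_left, mul_neg, sub_neg_eq_add] at this

theorem g_sub_inner_le (h : IsADMMSeq f g H ρ x v u) (hg : ConvexOn ℝ univ g) (k : ℕ) (w : F) :
    g (v (k + 1)) - ρ * ⟪u (k + 1), w - v (k + 1)⟫ ≤ g w := by
  set b := H (x (k + 1)) - u k with hb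
  have hmin : ∀ w, g (v (k + 1)) + ρ / 2 * ‖LinearMap.id (R := ℝ) (v (k + 1)) - b‖ ^ 2
      ≤ g w + ρ / 2 * ‖LinearMap.id (R := ℝ) w - b‖ ^ 2 := fun w => by
    simpa only [LinearMap.id_apply, sub_right_comm _ _ (u k), norm_sub_rev _ b] using h.v_min k w
  have hr : v (k + 1) - b = u (k + 1) := by rw [hb, h.u_succ]; abel
  simpa only [LinearMap.id_apply, hr] using
    hg.sub_inner_le_of_forall_le_add_norm_sq LinearMap.id _ hmin w

theorem inner_sub_sub_nonpos (h : IsADMMSeq f g H ρ x v u) (hg : ConvexOn ℝ univ g) (hρ : 0 < ρ)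
    (k : ℕ) : ⟪u (k + 2) - u (k + 1), v (k + 2) - v (k + 1)⟫ ≤ 0 := by
  have h₁ := h.g_sub_inner_le hg k (v (k + 2))
  have h₂ := h.g_sub_inner_le hg (k + 1) (v (k + 1))
  rw [← neg_sub (v (k + 2)), inner_neg_right] at h₂
  rw [inner_sub_left]
  nlinarith

theorem dist_sq_add_dist_sq_le (h : IsADMMSeq f g H ρ x v u) (hf : ConvexOn ℝ univ f)
    (hg : ConvexOn ℝ univ g) (hρ : 0 < ρ) {xb : E} {ub : F}
    (hL : IsLagrangeMultiplier f g H xb (ρ • ub)) (k : ℕ) :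
    dist (admmState v u (k + 1)) (WithLp.toLp 2 (H xb, ub)) ^ 2
        + dist (admmState v u (k + 1)) (admmState v u k) ^ 2
      ≤ dist (admmState v u k) (WithLp.toLp 2 (H xb, ub)) ^ 2 := by
  refine dist_sq_add_dist_sq_le_of_inner_nonpos ?_
  show ⟪WithLp.toLp 2 (v (k + 2), u (k + 2)) - WithLp.toLp 2 (H xb, ub),
    WithLp.toLp 2 (v (k + 2), u (k + 2)) - WithLp.toLp 2 (v (k + 1), u (k + 1))⟫ ≤ 0
  simp only [← WithLp.toLp_sub, Prod.mk_sub_mk, WithLp.prod_inner_apply]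
  have hM := h.inner_sub_sub_nonpos hg hρ k
  have hHx : H (x (k + 2)) = v (k + 2) - (u (k + 2) - u (k + 1)) := by rw [h.u_succ]; abel
  set Δu := u (k + 2) - u (k + 1)
  set Δv := v (k + 2) - v (k + 1)
  set e := v (k + 2) - H xb with he
  have hS : f xb + g (H xb) ≤ f (x (k + 2)) + g (v (k + 2)) + ρ * ⟪ub, Δu⟫ := by
    simpa only [hHx, sub_sub_cancel, real_inner_smul_left] using hL (x (k + 2)) (v (k + 2))
  have hF : f (x (k + 2)) + ρ * ⟪u (k + 2) - Δv, Δu - e⟫ ≤ f xb := by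
    rw [show Δu - e = H xb - H (x (k + 2)) by rw [hHx, he]; abel]
    exact h.f_add_inner_le hf (k + 1) xb
  have hG : g (v (k + 2)) + ρ * ⟪u (k + 2), e⟫ ≤ g (H xb) := by
    have : g (v (k + 2)) - ρ * ⟪u (k + 2), H xb - v (k + 2)⟫ ≤ g (H xb) :=
      h.g_sub_inner_le hg (k + 1) (H xb)
    rw [show H xb - v (k + 2) = -e by rw [he, neg_sub], inner_neg_right] at this
    linarith
  have hid : ⟪u (k + 2) - Δv, Δu - e⟫ + ⟪u (k + 2), e⟫ - ⟪ub, Δu⟫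
      = ⟪e, Δv⟫ + ⟪u (k + 2) - ub, Δu⟫ - ⟪Δu, Δv⟫ := by
    simp only [inner_sub_left, inner_sub_right]
    rw [real_inner_comm Δv e, real_inner_comm Δv Δu]
    ring
  have : ρ * (⟪e, Δv⟫ + ⟪u (k + 2) - ub, Δu⟫ - ⟪Δu, Δv⟫) ≤ 0 := by
    rw [← hid]
    linarith
  nlinarith

end IsADMMSeq

end ADMM

section Limit

variable {E F : Type*} [NormedAddCommGroup E] [NormedSpace ℝ E] [FiniteDimensional ℝ E]
  [NormedAddCommGroup F] [InnerProductSpace ℝ F] {H : E →ₗ[ℝ] F} {x : ℕ → E} {v u : ℕ → F}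

theorem tendsto_of_tendsto_admmState (hH : Function.Injective H)
    (hu : ∀ k, u (k + 1) = u k - H (x (k + 1)) + v (k + 1)) {xb : E} {ub : F}
    (hs : Tendsto (admmState v u) atTop (𝓝 (WithLp.toLp 2 (H xb, ub)))) :
    Tendsto x atTop (𝓝 xb) := by
  have hv : Tendsto (fun k => v (k + 1)) atTop (𝓝 (H xb)) :=
    ((WithLp.continuous_fst 2 F F).tendsto _).comp hs
  have hu' : Tendsto (fun k => u (k + 1)) atTop (𝓝 ub) :=
    ((WithLp.continuous_snd 2 F F).tendsto _).comp hs
  have hHx : Tendsto (fun k => H (x (k + 2))) atTop (𝓝 (H xb)) := by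
    have := (hv.comp (tendsto_add_atTop_nat 1)).sub ((hu'.comp (tendsto_add_atTop_nat 1)).sub hu')
    rw [sub_self, sub_zero] at this
    refine this.congr fun k => ?_
    simp only [Function.comp_apply, hu (k + 1)]
    abel
  rw [← tendsto_add_atTop_iff_nat 2]
  exact (LinearMap.isClosedEmbedding_of_injective (LinearMap.ker_eq_bot.2 hH)).isEmbedding
    |>.tendsto_nhds_iff.2 hHx

theorem IsADMMSeq.exists_isLagrangeMultiplier_of_tendsto {f : E → ℝ} {g : F → ℝ} {ρ : ℝ}
    (h : IsADMMSeq f g H ρ x v u) (hf : ConvexOn ℝ univ f) (hg : ConvexOn ℝ univ g)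
    (hfc : Continuous f) (hgc : Continuous g) (hH : Function.Injective H) {ψ : ℕ → ℕ}
    {a : WithLp 2 (F × F)} (h₀ : Tendsto (fun j => admmState v u (ψ j)) atTop (𝓝 a))
    (h₁ : Tendsto (fun j => admmState v u (ψ j + 1)) atTop (𝓝 a)) :
    ∃ xb, H xb = a.fst ∧ IsLagrangeMultiplier f g H xb (ρ • a.snd) := by
  have hv₀ : Tendsto (fun j => v (ψ j + 1)) atTop (𝓝 a.fst) :=
    ((WithLp.continuous_fst 2 F F).tendsto _).comp h₀
  have hv₁ : Tendsto (fun j => v (ψ j + 2)) atTop (𝓝 a.fst) :=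
    ((WithLp.continuous_fst 2 F F).tendsto _).comp h₁
  have hu₀ : Tendsto (fun j => u (ψ j + 1)) atTop (𝓝 a.snd) :=
    ((WithLp.continuous_snd 2 F F).tendsto _).comp h₀
  have hu₁ : Tendsto (fun j => u (ψ j + 2)) atTop (𝓝 a.snd) :=
    ((WithLp.continuous_snd 2 F F).tendsto _).comp h₁
  have hHx : Tendsto (fun j => H (x (ψ j + 2))) atTop (𝓝 a.fst) := by
    have := hv₁.sub (hu₁.sub hu₀)
    rw [sub_self, sub_zero] at this
    refine this.congr fun j => ?_
    rw [h.u_succ (ψ j + 1)]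
    abel
  have hemb := LinearMap.isClosedEmbedding_of_injective (LinearMap.ker_eq_bot.2 hH)
  obtain ⟨xb, hxb⟩ : a.fst ∈ range H :=
    hemb.isClosed_range.mem_of_tendsto hHx (Eventually.of_forall fun j => mem_range_self _)
  have hx : Tendsto (fun j => x (ψ j + 2)) atTop (𝓝 xb) :=
    hemb.isEmbedding.tendsto_nhds_iff.2 (by rw [hxb]; exact hHx)
  refine ⟨xb, hxb, isLagrangeMultiplier_of_forall_le (fun z => ?_) (fun w => ?_)⟩
  · have hlim := ((hfc.tendsto xb).comp hx).add ((tendsto_const_nhds (x := ρ)).mul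
      ((hu₁.sub (hv₁.sub hv₀)).inner ((tendsto_const_nhds (x := H z)).sub hHx)))
    simpa only [sub_self, sub_zero, ← hxb, real_inner_smul_left] using
      le_of_tendsto' hlim fun j => h.f_add_inner_le hf (ψ j + 1) z
  · have hlim := ((hgc.tendsto _).comp hv₁).sub ((tendsto_const_nhds (x := ρ)).mul
      (hu₁.inner ((tendsto_const_nhds (x := w)).sub hv₁)))
    simpa only [← hxb, real_inner_smul_left] using
      le_of_tendsto' hlim fun j => h.g_sub_inner_le hg (ψ j + 1) w

end Limit

/-- Eckstein–Bertsekas ADMM convergence (exact-minimization, finite-dimensional version):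
if `f`, `g` are convex and continuous, `H` is an injective linear map, `ρ > 0`, the
sequences satisfy the exact ADMM updates, and `x ↦ f(x) + g(Hx)` attains its minimum,
then `(x^k)` converges to a minimizer of `x ↦ f(x) + g(Hx)`. -/
theorem stmt_17 (n m : ℕ)
    (f : EuclideanSpace ℝ (Fin n) → ℝ) (g : EuclideanSpace ℝ (Fin m) → ℝ)
    (hf_convex : ConvexOn ℝ Set.univ f) (hf_cont : Continuous f)
    (hg_convex : ConvexOn ℝ Set.univ g) (hg_cont : Continuous g)
    (H : EuclideanSpace ℝ (Fin n) →ₗ[ℝ] EuclideanSpace ℝ (Fin m))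
    (hH : Function.Injective H)
    (ρ : ℝ) (hρ : 0 < ρ)
    (x : ℕ → EuclideanSpace ℝ (Fin n)) (v u : ℕ → EuclideanSpace ℝ (Fin m))
    (hx : ∀ k, ∀ z : EuclideanSpace ℝ (Fin n),
      f (x (k + 1)) + ρ / 2 * ‖H (x (k + 1)) - v k - u k‖ ^ 2 ≤
        f z + ρ / 2 * ‖H z - v k - u k‖ ^ 2)
    (hv : ∀ k, ∀ w : EuclideanSpace ℝ (Fin m),
      g (v (k + 1)) + ρ / 2 * ‖H (x (k + 1)) - v (k + 1) - u k‖ ^ 2 ≤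
        g w + ρ / 2 * ‖H (x (k + 1)) - w - u k‖ ^ 2)
    (hu : ∀ k, u (k + 1) = u k - H (x (k + 1)) + v (k + 1))
    (hmin : ∃ xs : EuclideanSpace ℝ (Fin n), ∀ z, f xs + g (H xs) ≤ f z + g (H z)) :
    ∃ xs : EuclideanSpace ℝ (Fin n),
      (∀ z, f xs + g (H xs) ≤ f z + g (H z)) ∧
      Filter.Tendsto x Filter.atTop (nhds xs) := by
  have h : IsADMMSeq f g H ρ x v u := ⟨hx, hv, hu⟩
  have hfejer {xb ub} (hL : IsLagrangeMultiplier f g H xb (ρ • ub)) :=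
    h.dist_sq_add_dist_sq_le hf_convex hg_convex hρ hL
  obtain ⟨xs, hxs⟩ := hmin
  obtain ⟨lam, hlam⟩ := exists_isLagrangeMultiplier hf_convex hg_convex hg_cont hxs
  rw [← smul_inv_smul₀ hρ.ne' lam] at hlam
  obtain ⟨a, -, φ, hφ, hsφ⟩ := (isCompact_closedBall _ _).tendsto_subseq fun k =>
    antitone_dist_of_dist_sq_add_dist_sq_le (hfejer hlam) (Nat.zero_le k)
  have hsφ' : Tendsto (fun j => admmState v u (φ j + 1)) atTop (𝓝 a) :=
    hsφ.congr_dist <| by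
      simpa only [Function.comp_def, dist_comm] using
        (tendsto_dist_succ_of_dist_sq_add_dist_sq_le (hfejer hlam)).comp hφ.tendsto_atTop
  obtain ⟨xb, hxb, hLb⟩ :=
    h.exists_isLagrangeMultiplier_of_tendsto hf_convex hg_convex hf_cont hg_cont hH hsφ hsφ'
  rw [show a = WithLp.toLp 2 (H xb, a.snd) by rw [hxb]; rfl] at hsφ
  have hs := tendsto_of_antitone_dist_of_tendsto_subseq
    (antitone_dist_of_dist_sq_add_dist_sq_le (hfejer hLb)) hφ.tendsto_atTop hsφ
  exact ⟨xb, fun z => by simpa using hLb z (H z), tendsto_of_tendsto_admmState hH hu hs⟩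
end
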